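/- Weak-* convergence of characters implies absorption: let (V_α)_{α} be a net of linear subspaces of ℝ^m and w_α ∈ V_α^⊥ (indexed by a directed set, equivalently formulated with a filter on the index type), let V ⊆ ℝ^m be a linear subspace and w ∈ V^⊥, and suppose the characters χ(V_α + w_α) converge to χ(V + w) in the weak-* topology (i.e. χ(V_α + w_α)(f) → χ(V+w)(f) for every f ∈ C_R(ℝ^m)). Then eventually V_α ⊆ V, and P_{V^⊥} w_α → w in ℝ^m. -/

import Mathlib

/-!
Test the characters on the resolvent functions `h^1_x`. Since `h^1_x` is the levee `g ∘ P_{ℝx}`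
with `g(u) = (i - ⟨x,u⟩)⁻¹`, the character `χ(V+w)` sends it to `(i - ⟨x,w⟩)⁻¹` if `x ⊥ V`
and to `0` otherwise. Hence for `x ∈ V^⊥` the values `χ(V_α + w_α)(h^1_x)` are eventually
nonzero, which forces `x ⊥ V_α`, and then they equal `(i - ⟨x,w_α⟩)⁻¹`, so `⟨x,w_α⟩ → ⟨x,w⟩`.
Running `x` over a finite spanning set of `V^⊥` gives both conclusions.
-/

open Filter Topology
open scoped BoundedContinuousFunction InnerProductSpace

noncomputable section

/-- `ℝ^m` with its standard inner product. -/
abbrev E (m : ℕ) : Type := EuclideanSpace ℝ (Fin m)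

/-- The resolvent functions `h^λ_x : y ↦ 1/(iλ - ⟨x,y⟩)`, as elements of `C_b(ℝ^m, ℂ)`. -/
def resolventFns (m : ℕ) : Set (E m →ᵇ ℂ) :=
  {f | ∃ (x : E m) (l : ℝ), l ≠ 0 ∧
    ∀ y : E m, f y = (Complex.I * (l : ℂ) - ((⟪x, y⟫_ℝ : ℝ) : ℂ))⁻¹}

/-- The commutative resolvent algebra: the smallest closed star-subalgebra of
`C_b(ℝ^m, ℂ)` containing all the functions `h^λ_x`. -/
def CR (m : ℕ) : StarSubalgebra ℂ (E m →ᵇ ℂ) :=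
  (StarAlgebra.adjoin ℂ (resolventFns m)).topologicalClosure

/-- The distance of `f` to the set `S` in the sup norm, `inf {‖f - ξ‖_∞ : ξ ∈ S}`. -/
def qdist {m : ℕ} (S : Set (E m →ᵇ ℂ)) (f : E m →ᵇ ℂ) : ℝ :=
  sInf ((fun ξ => ‖f - ξ‖) '' S)

/-- The recursive filtration `C_r(ℝ^m)`: `C_0` consists of the continuous functions vanishing
at infinity; `C_{r+1}` consists of those bounded continuous `f` admitting a countable family
of levees `g_i ∘ P_i`, with pairwise distinct orthogonal projections `P_i` onto
`(m - (r+1))`-dimensional subspaces and `g_i ∈ C₀(ran P_i)`, summing unconditionally to `f`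
in the seminorm `‖·‖_r = qdist (Cfilt m r)`. -/
def Cfilt (m : ℕ) : ℕ → Set (E m →ᵇ ℂ)
  | 0 => {f | Tendsto f (cocompact (E m)) (𝓝 0)}
  | (r + 1) =>
    {f | ∃ (I : Set ℕ) (V : I → Submodule ℝ (E m)) (g : ∀ i : I, V i → ℂ)
        (F : I → (E m →ᵇ ℂ)),
      Function.Injective V ∧
      (∀ i, Module.finrank ℝ (V i) = m - (r + 1)) ∧
      (∀ i, Continuous (g i)) ∧
      (∀ i, Tendsto (g i) (cocompact _) (𝓝 0)) ∧
      (∀ (i : I) (y : E m), F i y = g i (Submodule.orthogonalProjectionOnto (V i) y)) ∧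
      Tendsto (fun s : Finset I => qdist (Cfilt m r) (f - ∑ i ∈ s, F i)) atTop (𝓝 0)}


/-- The defining property of the character `χ(V+w)` of `C_R(ℝ^m)`: on any levee `g ∘ P_U`
(with `U ⊆ ℝ^m` a subspace and `g ∈ C₀(U)`) it takes the value `g(P_U w)` if `V ⊆ U^⊥`,
and `0` otherwise. -/
def IsResolventChar (m : ℕ) (V : Submodule ℝ (E m)) (w : E m)
    (φ : ↥(CR m) → ℂ) : Prop :=
  ∀ (U : Submodule ℝ (E m)) (g : U → ℂ), Continuous g →
    Tendsto g (cocompact _) (𝓝 0) →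
    ∀ f : ↥(CR m), (∀ y : E m, (f : E m →ᵇ ℂ) y = g (Submodule.orthogonalProjectionOnto U y)) →
      (V ≤ Uᗮ → φ f = g (Submodule.orthogonalProjectionOnto U w)) ∧ (¬ V ≤ Uᗮ → φ f = 0)

lemma Complex.I_sub_ofReal_ne_zero (t : ℝ) : Complex.I - t ≠ 0 := by
  intro h
  simpa using congrArg Complex.im h

lemma Complex.abs_le_norm_I_sub_ofReal (t : ℝ) : |t| ≤ ‖Complex.I - t‖ := by
  simpa using Complex.abs_re_le_norm (Complex.I - t)

lemma Complex.norm_inv_I_sub_ofReal_le_one (t : ℝ) : ‖(Complex.I - t)⁻¹‖ ≤ 1 := by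
  rw [norm_inv]
  apply inv_le_one_of_one_le₀
  simpa using Complex.abs_im_le_norm (Complex.I - t)

lemma Complex.tendsto_inv_I_sub_ofReal_cocompact :
    Tendsto (fun t : ℝ => (Complex.I - t)⁻¹) (cocompact ℝ) (𝓝 0) := by
  refine tendsto_inv₀_cobounded.comp ?_
  rw [← Metric.cobounded_eq_cocompact, ← tendsto_norm_atTop_iff_cobounded]
  exact tendsto_atTop_mono Complex.abs_le_norm_I_sub_ofReal tendsto_norm_cobounded_atTop

lemma Complex.tendsto_of_tendsto_inv_I_sub_ofReal {ι : Type*} {l : Filter ι} {a : ι → ℝ} {t : ℝ}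
    (h : Tendsto (fun α => (Complex.I - a α)⁻¹) l (𝓝 (Complex.I - t)⁻¹)) :
    Tendsto a l (𝓝 t) := by
  have h' := (tendsto_const_nhds (x := Complex.I)).sub
    (h.inv₀ (inv_ne_zero (Complex.I_sub_ofReal_ne_zero t)))
  simpa [Function.comp_def] using (Complex.continuous_re.tendsto _).comp h'

section InnerProductSpace

variable {F : Type*} [NormedAddCommGroup F] [InnerProductSpace ℝ F]

lemma tendsto_inner_span_singleton_cocompact (x : F) :
    Tendsto (fun u : ℝ ∙ x => ⟪x, (u : F)⟫_ℝ) (cocompact _) (cocompact ℝ) := by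
  let L : (ℝ ∙ x) →ₗ[ℝ] ℝ := (innerₛₗ ℝ x).comp (ℝ ∙ x).subtype
  have hL : LinearMap.ker L = ⊥ := by
    refine LinearMap.ker_eq_bot'.2 fun u hu => Subtype.ext ?_
    have hperp : (u : F) ∈ (ℝ ∙ x)ᗮ := Submodule.mem_orthogonal_singleton_iff_inner_right.2 hu
    simpa [Submodule.inf_orthogonal_eq_bot] using
      (Submodule.mem_inf.2 ⟨u.2, hperp⟩ : (u : F) ∈ (ℝ ∙ x) ⊓ (ℝ ∙ x)ᗮ)
  exact (LinearMap.isClosedEmbedding_of_injective hL).tendsto_cocompact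

/-- The resolvent function `h^1_x : y ↦ 1/(i - ⟨x,y⟩)`. -/
def resolventBCF (x : F) : F →ᵇ ℂ :=
  .ofNormedAddCommGroup (fun y => (Complex.I - ⟪x, y⟫_ℝ)⁻¹)
    ((continuous_const.sub (Complex.continuous_ofReal.comp
      (continuous_const.inner continuous_id))).inv₀ fun _ => Complex.I_sub_ofReal_ne_zero _)
    1 fun _ => Complex.norm_inv_I_sub_ofReal_le_one _

lemma Submodule.tendsto_orthogonalProjectionOnto_of_tendsto_inner {ι : Type*}
    (K : Submodule ℝ F) [FiniteDimensional ℝ K] {l : Filter ι} {u : ι → F} {y : F} (hy : y ∈ K)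
    (h : ∀ x ∈ K, Tendsto (fun α => ⟪x, u α⟫_ℝ) l (𝓝 ⟪x, y⟫_ℝ)) :
    Tendsto (fun α => (K.orthogonalProjectionOnto (u α) : F)) l (𝓝 y) := by
  let b := stdOrthonormalBasis ℝ K
  have hK : Tendsto (fun α => K.orthogonalProjectionOnto (u α)) l
      (𝓝 (K.orthogonalProjectionOnto y)) := by
    simp only [b.orthogonalProjectionOnto_apply_eq_sum]
    exact tendsto_finsetSum _ fun i _ => (h _ (b i).2).smul_const _
  rw [← Submodule.starProjection_eq_self_iff.2 hy]
  exact continuous_subtype_val.continuousAt.tendsto.comp hK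

end InnerProductSpace

lemma Submodule.FG.eventually_le {R M ι : Type*} [Semiring R] [AddCommMonoid M] [Module R M]
    {K : Submodule R M} (hK : K.FG) {W : ι → Submodule R M} {l : Filter ι}
    (h : ∀ x ∈ K, ∀ᶠ α in l, x ∈ W α) : ∀ᶠ α in l, K ≤ W α := by
  obtain ⟨S, rfl⟩ := hK
  have hS : ∀ᶠ α in l, ∀ x ∈ S, x ∈ W α :=
    (eventually_all_finset S).2 fun x hx => h x (Submodule.subset_span hx)
  filter_upwards [hS] with α hα
  exact Submodule.span_le.2 hα

def resolventCR (m : ℕ) (x : E m) : CR m :=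
  ⟨resolventBCF x, StarSubalgebra.le_topologicalClosure _ <|
    StarAlgebra.subset_adjoin ℂ _ ⟨x, 1, one_ne_zero, fun y => by simp [resolventBCF]⟩⟩

section IsResolventChar

variable {m : ℕ} {V : Submodule ℝ (E m)} {w : E m} {χ : CR m → ℂ}

lemma IsResolventChar.apply_resolventCR (hχ : IsResolventChar m V w χ) (x : E m) :
    (x ∈ Vᗮ → χ (resolventCR m x) = (Complex.I - ⟪x, w⟫_ℝ)⁻¹) ∧
      (x ∉ Vᗮ → χ (resolventCR m x) = 0) := by
  let g : (ℝ ∙ x) → ℂ := fun u => (Complex.I - ⟪x, (u : E m)⟫_ℝ)⁻¹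
  have hg_cont : Continuous g := (resolventBCF x).continuous.comp continuous_subtype_val
  have hg_zero : Tendsto g (cocompact _) (𝓝 0) :=
    Complex.tendsto_inv_I_sub_ofReal_cocompact.comp (tendsto_inner_span_singleton_cocompact x)
  have hg_proj (y : E m) : g ((ℝ ∙ x).orthogonalProjectionOnto y) = (Complex.I - ⟪x, y⟫_ℝ)⁻¹ := by
    have h := Submodule.inner_orthogonalProjectionOnto_eq_of_mem_left
      (⟨x, Submodule.mem_span_singleton_self x⟩ : ℝ ∙ x) y
    rw [Submodule.coe_inner] at h
    simp only [g, h]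
  have hlevee := hχ _ g hg_cont hg_zero (resolventCR m x) fun y => (hg_proj y).symm
  have hVx : V ≤ (ℝ ∙ x)ᗮ ↔ x ∈ Vᗮ := by
    rw [Submodule.le_orthogonal_iff_le_orthogonal, Submodule.span_singleton_le_iff_mem]
  exact ⟨fun hx => (hlevee.1 (hVx.2 hx)).trans (hg_proj w), fun hx => hlevee.2 (hVx.not.2 hx)⟩

lemma IsResolventChar.eventually_mem_orthogonal_and_tendsto_inner {ι : Type*} {l : Filter ι}
    {Vnet : ι → Submodule ℝ (E m)} {wnet : ι → E m} {χnet : ι → CR m → ℂ}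
    (hχnet : ∀ α, IsResolventChar m (Vnet α) (wnet α) (χnet α)) (hχ : IsResolventChar m V w χ)
    {x : E m} (hx : x ∈ Vᗮ)
    (hconv : Tendsto (fun α => χnet α (resolventCR m x)) l (𝓝 (χ (resolventCR m x)))) :
    (∀ᶠ α in l, x ∈ (Vnet α)ᗮ) ∧ Tendsto (fun α => ⟪x, wnet α⟫_ℝ) l (𝓝 ⟪x, w⟫_ℝ) := by
  rw [(hχ.apply_resolventCR x).1 hx] at hconv
  have hmem : ∀ᶠ α in l, x ∈ (Vnet α)ᗮ := by
    filter_upwards [hconv.eventually_ne (inv_ne_zero (Complex.I_sub_ofReal_ne_zero _))] with α hα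
    by_contra hx'
    exact hα (((hχnet α).apply_resolventCR x).2 hx')
  refine ⟨hmem, Complex.tendsto_of_tendsto_inv_I_sub_ofReal (hconv.congr' ?_)⟩
  filter_upwards [hmem] with α hα using ((hχnet α).apply_resolventCR x).1 hα

end IsResolventChar

theorem characters_tendsto_absorbed_general (m : ℕ) {ι : Type*} (l : Filter ι)
    (Vnet : ι → Submodule ℝ (E m)) (wnet : ι → E m)
    (V : Submodule ℝ (E m)) (w : E m) (hw : w ∈ Vᗮ)
    (φnet : ι → WeakDual.characterSpace ℂ (CR m)) (φ : WeakDual.characterSpace ℂ (CR m))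
    (hφnet : ∀ α, IsResolventChar m (Vnet α) (wnet α)
      (fun a => (φnet α : WeakDual ℂ (CR m)) a))
    (hφ : IsResolventChar m V w (fun a => (φ : WeakDual ℂ (CR m)) a))
    (hconv : ∀ f : ↥(CR m),
      Tendsto (fun α => (φnet α : WeakDual ℂ (CR m)) f) l (𝓝 ((φ : WeakDual ℂ (CR m)) f))) :
    (∀ᶠ α in l, Vnet α ≤ V) ∧
    Tendsto (fun α => (Submodule.orthogonalProjectionOnto Vᗮ (wnet α) : E m)) l (𝓝 w) := by
  have key (x : E m) (hx : x ∈ Vᗮ) :=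
    hφ.eventually_mem_orthogonal_and_tendsto_inner hφnet hx (hconv (resolventCR m x))
  constructor
  · filter_upwards [(IsNoetherian.noetherian Vᗮ).eventually_le fun x hx => (key x hx).1] with α hα
    exact Submodule.orthogonal_le_orthogonal_iff.1 hα
  · exact Vᗮ.tendsto_orthogonalProjectionOnto_of_tendsto_inner hw fun x hx => (key x hx).2

/-- weak-* convergence of characters implies absorption: if a net of characters
`χ(V_α + w_α)` converges pointwise to `χ(V + w)`, then eventually `V_α ⊆ V`, and
`P_{V^⊥} w_α → w`. -/
theorem characters_tendsto_absorbed (m : ℕ) {ι : Type*} (l : Filter ι) [l.NeBot]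
    (Vnet : ι → Submodule ℝ (E m)) (wnet : ι → E m) (hwnet : ∀ α, wnet α ∈ (Vnet α)ᗮ)
    (V : Submodule ℝ (E m)) (w : E m) (hw : w ∈ Vᗮ)
    (φnet : ι → WeakDual.characterSpace ℂ (CR m)) (φ : WeakDual.characterSpace ℂ (CR m))
    (hφnet : ∀ α, IsResolventChar m (Vnet α) (wnet α)
      (fun a => (φnet α : WeakDual ℂ (CR m)) a))
    (hφ : IsResolventChar m V w (fun a => (φ : WeakDual ℂ (CR m)) a))
    (hconv : ∀ f : ↥(CR m),
      Tendsto (fun α => (φnet α : WeakDual ℂ (CR m)) f) l (𝓝 ((φ : WeakDual ℂ (CR m)) f))) :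
    (∀ᶠ α in l, Vnet α ≤ V) ∧
    Tendsto (fun α => (Submodule.orthogonalProjectionOnto Vᗮ (wnet α) : E m)) l (𝓝 w) :=
  characters_tendsto_absorbed_general m l Vnet wnet V w hw φnet φ hφnet hφ hconv
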